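/- arXiv:2604.25394 — 5 statements merged into one kernel-verified Lean document; each statement's English description precedes it below -/
import Mathlib

section
/- Let N = 16n + 14 for some nonnegative integer n. Then σ₁(N) ≡ 0 (mod 8). -/
open ArithmeticFunction Finset
open scoped ArithmeticFunction.sigma

/-
Write N = 2m with m ≡ 7 (mod 8), so σ(N) = 3σ(m). Every unit of ZMod 8 is its own inverse, so for a
divisor d of m the complementary divisor m/d is congruent to -d and the pair contributes 0 mod 8;
the pairing has no fixed point because -1 is not a square mod 8.
-/

theorem ZMod.add_eq_zero_of_mul_eq_neg_one_eight :
    ∀ a b : ZMod 8, a * b = -1 → a + b = 0 := by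
  decide

theorem ZMod.mul_self_ne_neg_one_eight : ∀ a : ZMod 8, a * a ≠ -1 := by
  decide

theorem Nat.sum_divisors_cast_zmod_eight_eq_zero {m : ℕ} (hm : (m : ZMod 8) = -1) :
    ∑ d ∈ m.divisors, (d : ZMod 8) = 0 := by
  have hm0 : m ≠ 0 := by rintro rfl; exact absurd hm (by decide)
  have hpair : ∀ d ∈ m.divisors, (d : ZMod 8) * (m / d : ℕ) = -1 := fun d hd => by
    rw [← Nat.cast_mul, Nat.mul_div_cancel' (Nat.dvd_of_mem_divisors hd), hm]
  refine sum_involution (fun d _ => m / d)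
    (fun d hd => ZMod.add_eq_zero_of_mul_eq_neg_one_eight _ _ (hpair d hd))
    (fun d hd _ hfix => ZMod.mul_self_ne_neg_one_eight d (by simpa [hfix] using hpair d hd))
    (fun d hd => Nat.mem_divisors.mpr ⟨Nat.div_dvd_of_dvd (Nat.dvd_of_mem_divisors hd), hm0⟩)
    (fun d hd => Nat.div_div_self (Nat.dvd_of_mem_divisors hd) hm0)

theorem eight_dvd_sigma_one_of_mod_eight_eq_seven {m : ℕ} (hm : m % 8 = 7) : 8 ∣ σ 1 m := by
  have hm' : (m : ZMod 8) = -1 := by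
    rw [← ZMod.natCast_mod, hm]
    decide
  rw [← ZMod.natCast_eq_zero_iff, sigma_one_apply, Nat.cast_sum]
  exact Nat.sum_divisors_cast_zmod_eight_eq_zero hm'

theorem sigma_one_two_mul_of_odd {m : ℕ} (hm : Odd m) : σ 1 (2 * m) = 3 * σ 1 m := by
  rw [isMultiplicative_sigma.map_mul_of_coprime (Nat.coprime_two_left.mpr hm)]
  rfl

theorem stmt_5 (N n : ℕ) (hN : N = 16 * n + 14) :
    (∑ d ∈ N.divisors, d) % 8 = 0 := by
  have hN' : N = 2 * (8 * n + 7) := by omega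
  have hodd : Odd (8 * n + 7) := ⟨4 * n + 3, by ring⟩
  rw [← sigma_one_apply, hN', sigma_one_two_mul_of_odd hodd]
  exact Nat.mod_eq_zero_of_dvd
    (dvd_mul_of_dvd_right (eight_dvd_sigma_one_of_mod_eight_eq_seven (by omega)) 3)
end

section
/- Let N = 196n + 70 for some nonnegative integer n. Then σ₁(N) ≡ 0 (mod 8). -/
/-! Since 196n + 70 = 7(28n + 10) with 28n + 10 ≡ 3 (mod 7), multiplicativity of σ₁ gives
σ₁(N) = σ₁(7) · σ₁(28n + 10) = 8 · σ₁(28n + 10). -/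

theorem Nat.Prime.succ_dvd_sum_divisors_mul {p m : ℕ} (hp : p.Prime) (hm : ¬p ∣ m) :
    p + 1 ∣ ∑ d ∈ (p * m).divisors, d := by
  rw [((hp.coprime_iff_not_dvd).mpr hm).sum_divisors_mul, hp.sum_divisors]
  exact dvd_mul_right _ _

theorem stmt_6 (N n : ℕ) (hN : N = 196 * n + 70) :
    (∑ d ∈ N.divisors, d) % 8 = 0 := by
  have hfactor : N = 7 * (28 * n + 10) := by omega
  have hcofactor : ¬7 ∣ 28 * n + 10 := by omega
  rw [hfactor]
  exact Nat.mod_eq_zero_of_dvd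
    (Nat.Prime.succ_dvd_sum_divisors_mul (by norm_num) hcofactor)
end

section
/- Let m be a nonnegative integer and r an integer. Then 98m + 35 − 2r² is never a perfect square. -/
/-! Since $-2$ is not a square modulo $7$, the form $a^2 + 2b^2$ is divisible by $7$ only when
both $a$ and $b$ are, and then it is divisible by $49$. A square $c^2 = 98m + 35 - 2r^2$ would make
$c^2 + 2r^2 = 7(14m + 5)$ divisible by $7$ but not by $49$. -/

theorem ZMod.eq_zero_of_sq_add_two_mul_sq_eq_zero (x y : ZMod 7) (h : x ^ 2 + 2 * y ^ 2 = 0) :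
    x = 0 ∧ y = 0 := by
  revert x y
  decide

theorem Int.seven_dvd_of_seven_dvd_sq_add_two_mul_sq {a b : ℤ} (h : 7 ∣ a ^ 2 + 2 * b ^ 2) :
    7 ∣ a ∧ 7 ∣ b := by
  have h7 := (ZMod.intCast_zmod_eq_zero_iff_dvd _ 7).mpr h
  push_cast at h7
  obtain ⟨ha, hb⟩ := ZMod.eq_zero_of_sq_add_two_mul_sq_eq_zero _ _ h7
  exact ⟨(ZMod.intCast_zmod_eq_zero_iff_dvd a 7).mp ha,
    (ZMod.intCast_zmod_eq_zero_iff_dvd b 7).mp hb⟩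

theorem Int.forty_nine_dvd_of_seven_dvd_sq_add_two_mul_sq {a b : ℤ}
    (h : 7 ∣ a ^ 2 + 2 * b ^ 2) : 49 ∣ a ^ 2 + 2 * b ^ 2 := by
  obtain ⟨⟨k, rfl⟩, ⟨l, rfl⟩⟩ := Int.seven_dvd_of_seven_dvd_sq_add_two_mul_sq h
  exact ⟨k ^ 2 + 2 * l ^ 2, by ring⟩

theorem stmt_13 (m : ℕ) (r : ℤ) :
    ¬ ∃ c : ℤ, (98 * (m : ℤ) + 35 - 2 * r ^ 2) = c ^ 2 := by
  rintro ⟨c, hc⟩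
  have hform : c ^ 2 + 2 * r ^ 2 = 7 * (14 * m + 5) := by linarith
  have h49 : 49 ∣ c ^ 2 + 2 * r ^ 2 :=
    Int.forty_nine_dvd_of_seven_dvd_sq_add_two_mul_sq ⟨14 * m + 5, hform⟩
  rw [hform] at h49
  omega
end

section
/- Let N = 196m + 70 and let r be an integer with (2r)² < N. Then σ₀(N − (2r)²) ≡ 0 (mod 4). -/
/-!
Write `N - (2r)² = 2k`. Since `N ≡ 2 (mod 4)`, `k` is odd, so `σ₀(N - (2r)²) = 2 σ₀(k)`, and it
suffices that `k` is not a square, as only squares have an odd number of divisors. But `k = s²`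
would give `s² + 2r² = 98m + 35`; as `-2` is not a square mod 7, this forces `7 ∣ s` and `7 ∣ r`,
hence `49 ∣ 98m + 35`, which is false.
-/

theorem Nat.isSquare_of_odd_card_divisors {n : ℕ} (h : Odd n.divisors.card) : IsSquare n := by
  rcases eq_or_ne n 0 with rfl | hn
  · exact ⟨0, rfl⟩
  rw [Nat.card_divisors hn] at h
  refine ⟨∏ p ∈ n.primeFactors, p ^ (n.factorization p / 2), ?_⟩
  conv_lhs => rw [← Nat.prod_factorization_pow_eq_self hn]
  rw [Finsupp.prod, Nat.support_factorization, ← Finset.prod_mul_distrib]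
  refine Finset.prod_congr rfl fun p hp => ?_
  have hodd : Odd (n.factorization p + 1) := h.of_dvd_nat (Finset.dvd_prod_of_mem _ hp)
  rw [← pow_add, ← two_mul, Nat.two_mul_div_two_of_even (by simpa [Nat.odd_add_one] using hodd)]

theorem Nat.card_divisors_two_mul_of_odd {k : ℕ} (hk : Odd k) :
    (2 * k).divisors.card = 2 * k.divisors.card := by
  rw [Nat.Coprime.card_divisors_mul (Nat.coprime_two_left.mpr hk)]
  rfl

theorem ZMod.eq_zero_and_eq_zero_of_sq_add_two_mul_sq_eq_zero {a b : ZMod 7}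
    (h : a ^ 2 + 2 * b ^ 2 = 0) : a = 0 ∧ b = 0 := by
  revert a b
  decide

theorem Nat.seven_dvd_and_seven_dvd_of_dvd_sq_add_two_mul_sq {s t : ℕ}
    (h : 7 ∣ s ^ 2 + 2 * t ^ 2) : 7 ∣ s ∧ 7 ∣ t := by
  simp only [← ZMod.natCast_eq_zero_iff] at h ⊢
  push_cast at h
  exact ZMod.eq_zero_and_eq_zero_of_sq_add_two_mul_sq_eq_zero h

theorem Nat.sq_add_two_mul_sq_ne (s t m : ℕ) : s ^ 2 + 2 * t ^ 2 ≠ 98 * m + 35 := by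
  intro h
  obtain ⟨⟨a, rfl⟩, ⟨b, rfl⟩⟩ :=
    Nat.seven_dvd_and_seven_dvd_of_dvd_sq_add_two_mul_sq (s := s) (t := t) (by omega)
  have : 49 * (a ^ 2 + 2 * b ^ 2) = 98 * m + 35 := by rw [← h]; ring
  omega

theorem stmt_14 (N m : ℕ) (hN : N = 196 * m + 70) (r : ℤ)
    (hr : (2 * r) ^ 2 < (N : ℤ)) :
    (((N : ℤ) - (2 * r) ^ 2).toNat).divisors.card % 4 = 0 := by
  subst hN
  set t := r.natAbs
  have hsq : (2 * r) ^ 2 = 4 * (t : ℤ) ^ 2 := by rw [Int.natCast_natAbs, sq_abs]; ring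
  have ht : 2 * t ^ 2 < 98 * m + 35 := by
    rw [hsq] at hr
    push_cast at hr
    exact_mod_cast (by linarith : (2 * t ^ 2 : ℤ) < 98 * m + 35)
  set k := 98 * m + 35 - 2 * t ^ 2
  have hk : ((196 * m + 70 : ℕ) - (2 * r) ^ 2 : ℤ) = ((2 * k : ℕ) : ℤ) := by
    push_cast [k, hsq, Nat.cast_sub ht.le]
    ring
  have hk_odd : Odd k := by rw [Nat.odd_iff]; omega
  have hk_not_sq : ¬IsSquare k := by
    rintro ⟨s, hs⟩
    exact Nat.sq_add_two_mul_sq_ne s t m (by rw [sq]; omega)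
  obtain ⟨c, hc⟩ := Nat.not_odd_iff_even.mp (mt Nat.isSquare_of_odd_card_divisors hk_not_sq)
  rw [hk, Int.toNat_natCast, Nat.card_divisors_two_mul_of_odd hk_odd, hc]
  omega
end

section
/- Let N = 6n with gcd(n, 6) = 1, and let a be an integer with (3a)² < N. Then σ₀(N − (3a)²) ≡ 0 (mod 4). -/
/-!
Write `N - (3a)² = 3k` with `k = 2n - 3a²`, which is prime to `3` because `3 ∤ n`;
hence `σ₀(N - 9a²) = 2 σ₀(k)`. A non-square has an even number of divisors, and `k` is
not a square: `k = c²` would give `2n = 3a² + c²`, impossible modulo `4` for odd `n`.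
-/

open Finset

theorem Nat.isSquare_of_forall_even_factorization {m : ℕ} (h : ∀ p, Even (m.factorization p)) :
    IsSquare m := by
  rcases eq_or_ne m 0 with rfl | hm
  · exact ⟨0, rfl⟩
  refine ⟨m.factorization.prod fun p e => p ^ (e / 2), ?_⟩
  conv_lhs => rw [← Nat.prod_factorization_pow_eq_self hm]
  rw [Finsupp.prod, Finsupp.prod, ← prod_mul_distrib]
  refine prod_congr rfl fun p _ => ?_
  rw [← pow_add]
  obtain ⟨k, hk⟩ := h p
  congr 1
  omega

theorem Nat.even_card_divisors_of_not_isSquare {m : ℕ} (h : ¬IsSquare m) :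
    Even #m.divisors := by
  rcases eq_or_ne m 0 with rfl | hm
  · simp
  contrapose! h
  refine Nat.isSquare_of_forall_even_factorization fun p => ?_
  by_cases hp : p ∈ m.primeFactors
  · have hdvd : m.factorization p + 1 ∣ #m.divisors :=
      Nat.card_divisors hm ▸ dvd_prod_of_mem _ hp
    rw [Nat.not_even_iff_odd] at h
    obtain ⟨k, hk⟩ := h.of_dvd_nat hdvd
    exact ⟨k, by omega⟩
  · rw [← Nat.support_factorization, Finsupp.notMem_support_iff] at hp
    simp [hp]

theorem Nat.card_divisors_prime_mul {p m : ℕ} (hp : p.Prime) (hpm : ¬p ∣ m) :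
    #(p * m).divisors = 2 * #m.divisors := by
  rw [Nat.Coprime.card_divisors_mul ((Nat.Prime.coprime_iff_not_dvd hp).2 hpm), hp.divisors,
    card_pair hp.one_lt.ne]

theorem Int.three_mul_sq_add_sq_ne_two_mul_odd {m : ℤ} (hm : Odd m) (a c : ℤ) :
    3 * a ^ 2 + c ^ 2 ≠ 2 * m := by
  obtain ⟨j, rfl⟩ := hm
  intro h
  have key : ∀ x y : ZMod 4, 3 * x ^ 2 + y ^ 2 ≠ 2 := by decide
  apply key a c
  have h4 := congrArg (Int.cast : ℤ → ZMod 4) (h.trans (by ring : 2 * (2 * j + 1) = 4 * j + 2))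
  push_cast at h4
  simpa [show (4 : ZMod 4) = 0 from rfl] using h4

theorem stmt_15 (N n : ℕ) (hN : N = 6 * n) (hgcd : Nat.gcd n 6 = 1) (a : ℤ)
    (ha : (3 * a) ^ 2 < (N : ℤ)) :
    (((N : ℤ) - (3 * a) ^ 2).toNat).divisors.card % 4 = 0 := by
  subst hN
  obtain ⟨hcop2, hcop3⟩ := Nat.coprime_mul_iff_right.1 (show n.Coprime (2 * 3) from hgcd)
  have hn_odd : Odd (n : ℤ) := by exact_mod_cast hcop2.odd_of_right
  have hn3 : ¬3 ∣ n := (Nat.Prime.coprime_iff_not_dvd Nat.prime_three).1 hcop3.symm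
  obtain ⟨k, hk⟩ :=
    Int.eq_ofNat_of_zero_le (a := 2 * n - 3 * a ^ 2) (by push_cast at ha; linarith)
  have hsub : ((6 * n : ℕ) : ℤ) - (3 * a) ^ 2 = ((3 * k : ℕ) : ℤ) := by
    push_cast; linear_combination 3 * hk
  have hk3 : ¬3 ∣ k := by
    rintro ⟨t, rfl⟩
    exact hn3 (by push_cast at hk; omega)
  have hk_sq : ¬IsSquare k := by
    rintro ⟨c, rfl⟩
    push_cast at hk
    exact Int.three_mul_sq_add_sq_ne_two_mul_odd hn_odd a c (by linear_combination -hk)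
  obtain ⟨r, hr⟩ := Nat.even_card_divisors_of_not_isSquare hk_sq
  rw [hsub, Int.toNat_natCast, Nat.card_divisors_prime_mul Nat.prime_three hk3, hr]
  omega
end
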